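/- arXiv:0808.2487 — 2 statements merged into one kernel-verified Lean document; each statement's English description precedes it below -/
import Mathlib

section
/- Let α₁ = id, α₂, ..., α_n be automorphisms of the hyperfinite II₁ factor R with α₂, ..., α_n outer, let M₁ = R ⊗ M_n(ℂ) with matrix units e_{ij}, let M₀ = α(R) where α(y) = Σᵢ e_{ii} ⊗ αᵢ(y), and let G be the image in Out R of the group generated by the αᵢ. Then for every x = (x_n) in M₀^ω ∩ M₁' and every g ∈ G, the pointwise ultrapower automorphism (α_g)_ω fixes x; that is, M₀^ω ∩ M₁' is contained in the fixed-point algebra of the action of G on (M₁)_ω. -/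
open scoped ENNReal

noncomputable section

section Base

variable {M : Type*} [NormedRing M] [StarRing M] [CStarRing M] [NormedAlgebra ℂ M] [StarModule ℂ M] [PartialOrder M] [StarOrderedRing M] [CompleteSpace M]

/-- A faithful normalized tracial state (the trace of a finite von Neumann algebra). -/
structure IsTracialState (tr : M →ₗ[ℂ] ℂ) : Prop where
  map_one : tr 1 = 1
  tr_comm : ∀ x y : M, tr (x * y) = tr (y * x)
  pos : ∀ x : M, 0 ≤ x → ∃ r : ℝ, 0 ≤ r ∧ tr x = (r : ℂ)
  faithful : ∀ x : M, 0 ≤ x → tr x = 0 → x = 0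
  norm_le : ∀ x : M, ‖tr x‖ ≤ ‖x‖

/-- The trace 2-norm `‖x‖₂ = √(tr (x* x))`. -/
def nrm2 (tr : M →ₗ[ℂ] ℂ) (x : M) : ℝ := Real.sqrt ((tr (star x * x)).re)

/-- The commutant of a subset. -/
def commutantSet (S : Set M) : Set M := {x | ∀ s ∈ S, s * x = x * s}

/-- The relative commutant `A' ∩ B`. -/
def relCommSet (A B : Set M) : Set M := {x | x ∈ B ∧ ∀ a ∈ A, a * x = x * a}

/-- The center of a subset: elements of `S` commuting with all of `S`. -/
def centerSet (S : Set M) : Set M := {x | x ∈ S ∧ ∀ y ∈ S, x * y = y * x}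

/-- `S` is a (sub)factor: its relative center consists of scalars. -/
def IsSubFactorSet (S : Set M) : Prop :=
  ∀ z ∈ S, (∀ y ∈ S, z * y = y * z) → ∃ c : ℂ, z = algebraMap ℂ M c

/-- A trace-preserving conditional expectation onto the subalgebra (set) `A`. -/
structure IsCondExp (tr : M →ₗ[ℂ] ℂ) (A : Set M) (E : M →ₗ[ℂ] M) : Prop where
  mem : ∀ x : M, E x ∈ A
  fix : ∀ x ∈ A, E x = x
  bimod : ∀ a ∈ A, ∀ b ∈ A, ∀ x : M, E (a * x * b) = a * E x * b
  pos : ∀ x : M, 0 ≤ x → 0 ≤ E x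
  map_star : ∀ x : M, E (star x) = star (E x)
  trace_eq : ∀ x : M, tr (E x) = tr x

/-- The Pimsner–Popa index `[B : A]` of an inclusion `A ⊆ B`, computed from the
trace-preserving conditional expectation `E` onto `A`: the reciprocal of the best
constant `λ` such that `λ • x ≤ E x` for every positive `x ∈ B`. -/
def ppIndex (E : M →ₗ[ℂ] M) (B : Set M) : ℝ≥0∞ :=
  (⨆ (l : NNReal) (_ : ∀ x ∈ B, 0 ≤ x → (((l : ℝ) : ℂ)) • x ≤ E x), (l : ℝ≥0∞))⁻¹

/-- A II₁ factor: an infinite-dimensional factor with a faithful tracial state. -/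
structure IsII1Factor (tr : M →ₗ[ℂ] ℂ) : Prop where
  tracial : IsTracialState tr
  factor : ∀ z : M, (∀ y : M, z * y = y * z) → ∃ c : ℂ, z = algebraMap ℂ M c
  infiniteDimensional : ¬ FiniteDimensional ℂ M

/-- Hyperfiniteness of `S`: an increasing chain of finite-dimensional *-subalgebras
contained in `S` whose union is `‖·‖₂`-dense in `S`. -/
def IsHyperfiniteSet (tr : M →ₗ[ℂ] ℂ) (S : Set M) : Prop :=
  ∃ B : ℕ → StarSubalgebra ℂ M, Monotone B ∧ (∀ n, FiniteDimensional ℂ ↥(B n)) ∧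
    (∀ n, (B n : Set M) ⊆ S) ∧
    ∀ x ∈ S, ∀ ε : ℝ, 0 < ε → ∃ n, ∃ y ∈ B n, nrm2 tr (x - y) < ε

/-- A bounded sequence. -/
def BddSeq (x : ℕ → M) : Prop := ∃ C : ℝ, ∀ n, ‖x n‖ ≤ C

/-- A free ultrafilter on ℕ: one containing all cofinite sets. -/
def IsFreeUltrafilter (ω : Ultrafilter ℕ) : Prop := (ω : Filter ℕ) ≤ Filter.cofinite

variable {N : Type*} [NormedRing N] [StarRing N] [CStarRing N] [NormedAlgebra ℂ N] [StarModule ℂ N] [PartialOrder N] [StarOrderedRing N] [CompleteSpace N]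

/-- `π` presents `N` as the tracial ultrapower `M^ω`: the quotient of the algebra of
bounded sequences in `M` by the ideal of sequences with `‖·‖₂ → 0` along `ω`. -/
structure IsUltrapower (ω : Ultrafilter ℕ) (trM : M →ₗ[ℂ] ℂ) (trN : N →ₗ[ℂ] ℂ)
    (π : (ℕ → M) → N) : Prop where
  map_add : ∀ x y : ℕ → M, BddSeq x → BddSeq y → π (fun n => x n + y n) = π x + π y
  map_mul : ∀ x y : ℕ → M, BddSeq x → BddSeq y → π (fun n => x n * y n) = π x * π y
  map_smul : ∀ (c : ℂ) (x : ℕ → M), BddSeq x → π (fun n => c • x n) = c • π x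
  map_star : ∀ x : ℕ → M, BddSeq x → π (fun n => star (x n)) = star (π x)
  map_one : π (fun _ => 1) = 1
  norm_le : ∀ (x : ℕ → M) (C : ℝ), (∀ n, ‖x n‖ ≤ C) → ‖π x‖ ≤ C
  trace_tendsto : ∀ x : ℕ → M, BddSeq x →
    Filter.Tendsto (fun n => trM (x n)) (ω : Filter ℕ) (nhds (trN (π x)))
  eq_iff : ∀ x y : ℕ → M, BddSeq x → BddSeq y →
    (π x = π y ↔ Filter.Tendsto (fun n => nrm2 trM (x n - y n)) (ω : Filter ℕ) (nhds 0))
  surj : ∀ z : N, ∃ x : ℕ → M, BddSeq x ∧ π x = z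

/-- The canonical embedding of `M` into the ultrapower, via constant sequences. -/
def uConst (π : (ℕ → M) → N) (a : M) : N := π (fun _ => a)

/-- The image `S^ω` in the ultrapower of the bounded sequences with entries in `S`. -/
def uSet (π : (ℕ → M) → N) (S : Set M) : Set N :=
  {z | ∃ x : ℕ → M, BddSeq x ∧ (∀ n, x n ∈ S) ∧ π x = z}

end Base

/-!
Write `x_m = ∑ᵢ ι(αᵢ(y_m)) eᵢᵢ`. Asymptotic commutation with `e_{j0}` gives
`‖αⱼ(y_m) - y_m‖₂ → 0` (this is where `α₀ = id` enters), and with `ι(u)` gives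
`‖u y_m - y_m u‖₂ → 0`. The trace-preserving automorphisms asymptotically fixing `(y_m)` form a
group, so every `β` in the group generated by the `αᵢ` fixes `(y_m)` asymptotically; then
`γ = Ad u ∘ β` moves each `αᵢ(y_m)` by `o(1)` in `‖·‖₂`, whence `‖γ(x_m) - x_m‖₂ → 0`.
-/

open Filter Topology

section TraceNorm

variable {M : Type*} [NormedRing M] [StarRing M] [NormedAlgebra ℂ M]

theorem nrm2_nonneg (tr : M →ₗ[ℂ] ℂ) (x : M) : 0 ≤ nrm2 tr x := Real.sqrt_nonneg _

theorem nrm2_zero (tr : M →ₗ[ℂ] ℂ) : nrm2 tr (0 : M) = 0 := by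
  simp [nrm2]

theorem nrm2_neg (tr : M →ₗ[ℂ] ℂ) (x : M) : nrm2 tr (-x) = nrm2 tr x := by
  simp [nrm2]

theorem nrm2_sub_comm (tr : M →ₗ[ℂ] ℂ) (x y : M) : nrm2 tr (x - y) = nrm2 tr (y - x) := by
  rw [← neg_sub, nrm2_neg]

theorem nrm2_unitary_mul (tr : M →ₗ[ℂ] ℂ) {u : M} (hu : u ∈ unitary M) (x : M) :
    nrm2 tr (u * x) = nrm2 tr x := by
  rw [nrm2, star_mul, mul_assoc, ← mul_assoc (star u), Unitary.star_mul_self_of_mem hu, one_mul,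
    nrm2]

variable [PartialOrder M] {tr : M →ₗ[ℂ] ℂ}

theorem IsTracialState.nrm2_mul_unitary (h : IsTracialState tr) {u : M} (hu : u ∈ unitary M)
    (x : M) : nrm2 tr (x * u) = nrm2 tr x := by
  rw [nrm2, star_mul, mul_assoc, h.tr_comm, mul_assoc, mul_assoc, Unitary.mul_star_self_of_mem hu,
    mul_one, nrm2]

variable [StarOrderedRing M]

theorem IsTracialState.tr_star_mul_self (h : IsTracialState tr) (x : M) :
    tr (star x * x) = ((nrm2 tr x ^ 2 : ℝ) : ℂ) := by
  obtain ⟨r, hr0, hr⟩ := h.pos _ (star_mul_self_nonneg x)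
  simp [nrm2, hr, Real.sq_sqrt hr0]

theorem IsTracialState.re_tr_star_mul_self (h : IsTracialState tr) (x : M) :
    (tr (star x * x)).re = nrm2 tr x ^ 2 := by
  rw [h.tr_star_mul_self, Complex.ofReal_re]

variable [StarModule ℂ M]

theorem IsTracialState.nrm2_add_smul_sq (h : IsTracialState tr) (x y : M) (t : ℝ) :
    nrm2 tr (x + (t : ℂ) • y) ^ 2 =
      nrm2 tr x ^ 2 + t * (tr (star x * y) + tr (star y * x)).re + t ^ 2 * nrm2 tr y ^ 2 := by
  have expand : star (x + (t : ℂ) • y) * (x + (t : ℂ) • y) =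
      star x * x + (t : ℂ) • (star x * y + star y * x) + ((t : ℂ) ^ 2) • (star y * y) := by
    simp only [star_add, star_smul, Complex.star_def, Complex.conj_ofReal, add_mul, mul_add,
      smul_mul_assoc, mul_smul_comm, smul_smul, smul_add, sq]
    abel
  rw [← h.re_tr_star_mul_self, expand, map_add, map_add, map_smul, map_smul, h.tr_star_mul_self,
    h.tr_star_mul_self]
  simp [← Complex.ofReal_pow]

theorem IsTracialState.re_tr_star_mul_add_le (h : IsTracialState tr) (x y : M) :
    (tr (star x * y) + tr (star y * x)).re ≤ 2 * nrm2 tr x * nrm2 tr y := by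
  set s := (tr (star x * y) + tr (star y * x)).re
  have hdiscrim : discrim (nrm2 tr y ^ 2) s (nrm2 tr x ^ 2) ≤ 0 :=
    discrim_le_zero fun t => by
      nlinarith [h.nrm2_add_smul_sq x y t, sq_nonneg (nrm2 tr (x + (t : ℂ) • y))]
  have hxy : 0 ≤ 2 * nrm2 tr x * nrm2 tr y :=
    mul_nonneg (mul_nonneg zero_le_two (nrm2_nonneg tr x)) (nrm2_nonneg tr y)
  refine le_trans (le_abs_self s) (abs_le_of_sq_le_sq ?_ hxy)
  unfold discrim at hdiscrim
  nlinarith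

theorem IsTracialState.nrm2_add_le (h : IsTracialState tr) (x y : M) :
    nrm2 tr (x + y) ≤ nrm2 tr x + nrm2 tr y := by
  have hsq := h.nrm2_add_smul_sq x y 1
  simp only [Complex.ofReal_one, one_smul, one_mul, one_pow] at hsq
  refine (pow_le_pow_iff_left₀ (nrm2_nonneg tr _)
    (add_nonneg (nrm2_nonneg tr x) (nrm2_nonneg tr y)) two_ne_zero).1 ?_
  nlinarith [h.re_tr_star_mul_add_le x y]

end TraceNorm

section Automorphisms

variable {M : Type*} [NormedRing M] [StarRing M] [NormedAlgebra ℂ M]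

def traceStarAut (tr : M →ₗ[ℂ] ℂ) : Subgroup (M ≃ₐ[ℂ] M) where
  carrier := {β | (∀ x, β (star x) = star (β x)) ∧ ∀ x, tr (β x) = tr x}
  one_mem' := ⟨fun _ => rfl, fun _ => rfl⟩
  mul_mem' := fun {β β'} ⟨hβ, hβtr⟩ ⟨hβ', hβ'tr⟩ =>
    ⟨fun x => by simp only [AlgEquiv.mul_apply, hβ', hβ], fun x => by
      simp only [AlgEquiv.mul_apply, hβtr, hβ'tr]⟩
  inv_mem' := fun {β} ⟨hβ, hβtr⟩ =>
    ⟨fun x => β.injective (by simp only [AlgEquiv.coe_inv, hβ, AlgEquiv.apply_symm_apply]),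
      fun x => by rw [← hβtr, AlgEquiv.coe_inv, AlgEquiv.apply_symm_apply]⟩

theorem nrm2_map_of_mem_traceStarAut {tr : M →ₗ[ℂ] ℂ} {β : M ≃ₐ[ℂ] M}
    (hβ : β ∈ traceStarAut tr) (x : M) : nrm2 tr (β x) = nrm2 tr x := by
  rw [nrm2, ← hβ.1, ← map_mul, hβ.2, nrm2]

variable [PartialOrder M] [StarOrderedRing M] [StarModule ℂ M] {tr : M →ₗ[ℂ] ℂ}

theorem IsTracialState.nrm2_sub_le (h : IsTracialState tr) (x y : M) :
    nrm2 tr (x - y) ≤ nrm2 tr x + nrm2 tr y := by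
  simpa only [sub_eq_add_neg, nrm2_neg] using h.nrm2_add_le x (-y)

/-- Restricting to `traceStarAut` makes this closed under products: those automorphisms are
`‖·‖₂`-isometries. -/
def asymptoticStabilizer (h : IsTracialState tr) (l : Filter ℕ) (y : ℕ → M) :
    Subgroup (M ≃ₐ[ℂ] M) where
  carrier := {β | β ∈ traceStarAut tr ∧ Tendsto (fun m => nrm2 tr (β (y m) - y m)) l (𝓝 0)}
  one_mem' := ⟨one_mem _, by simpa [nrm2_zero] using tendsto_const_nhds⟩
  mul_mem' := fun {β β'} ⟨hβ, hβy⟩ ⟨hβ', hβ'y⟩ => by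
    refine ⟨mul_mem hβ hβ', squeeze_zero (fun _ => nrm2_nonneg tr _) (fun m => ?_)
      (by simpa using hβ'y.add hβy)⟩
    have hsplit : (β * β') (y m) - y m = β (β' (y m) - y m) + (β (y m) - y m) := by
      rw [AlgEquiv.mul_apply, map_sub]
      abel
    rw [hsplit, ← nrm2_map_of_mem_traceStarAut hβ (β' (y m) - y m)]
    exact h.nrm2_add_le _ _
  inv_mem' := fun {β} ⟨hβ, hβy⟩ => by
    refine ⟨inv_mem hβ, hβy.congr fun m => ?_⟩
    rw [← nrm2_map_of_mem_traceStarAut (inv_mem hβ), map_sub, AlgEquiv.coe_inv,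
      AlgEquiv.symm_apply_apply, nrm2_sub_comm]

theorem IsTracialState.tendsto_nrm2_unitary_conj_sub (h : IsTracialState tr) {l : Filter ℕ}
    {u : M} (hu : u ∈ unitary M) {y a b : ℕ → M}
    (huy : Tendsto (fun m => nrm2 tr (u * y m - y m * u)) l (𝓝 0))
    (hby : Tendsto (fun m => nrm2 tr (b m - y m)) l (𝓝 0))
    (hay : Tendsto (fun m => nrm2 tr (a m - y m)) l (𝓝 0)) :
    Tendsto (fun m => nrm2 tr (u * b m * star u - a m)) l (𝓝 0) := by
  refine squeeze_zero (fun _ => nrm2_nonneg tr _) (fun m => ?_)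
    (by simpa using hby.add (huy.add hay))
  have hsplit : u * b m * star u - a m =
      u * (b m - y m) * star u + ((u * y m - y m * u) * star u - (a m - y m)) := by
    rw [sub_mul (u * y m), mul_assoc (y m), Unitary.mul_star_self_of_mem hu, mul_one, mul_sub,
      sub_mul]
    abel
  rw [hsplit]
  refine (h.nrm2_add_le _ _).trans (add_le_add ?_ ((h.nrm2_sub_le _ _).trans ?_))
  · rw [h.nrm2_mul_unitary (Unitary.star_mem hu), nrm2_unitary_mul tr hu]
  · rw [h.nrm2_mul_unitary (Unitary.star_mem hu)]

end Automorphisms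

section MatrixUnits

variable {R M : Type*} [NormedRing R] [StarRing R] [NormedAlgebra ℂ R]
  [NormedRing M] [StarRing M] [NormedAlgebra ℂ M] {n : ℕ}

/-- `ι` and `e` present `M` as `R ⊗ Mₙ(ℂ)`, with `ι r * e i j` playing the role of `r ⊗ eᵢⱼ`. -/
structure IsTensorMatrixUnits (trR : R →ₗ[ℂ] ℂ) (trM : M →ₗ[ℂ] ℂ) (ι : R →⋆ₐ[ℂ] M)
    (e : Fin n → Fin n → M) : Prop where
  mul_eq : ∀ i j k l, e i j * e k l = if j = k then e i l else 0
  star_eq : ∀ i j, star (e i j) = e j i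
  comm : ∀ r i j, ι r * e i j = e i j * ι r
  trace_eq : ∀ r i j, trM (ι r * e i j) = if i = j then (n : ℂ)⁻¹ * trR r else 0

/-- The paper's `α(y) = ∑ᵢ eᵢᵢ ⊗ αᵢ(y)` is `diagSum ι e (fun i => α i y)`. -/
def diagSum (ι : R →⋆ₐ[ℂ] M) (e : Fin n → Fin n → M) (c : Fin n → R) : M :=
  ∑ i, ι (c i) * e i i

theorem diagSum_sub (ι : R →⋆ₐ[ℂ] M) (e : Fin n → Fin n → M) (c d : Fin n → R) :
    diagSum ι e c - diagSum ι e d = diagSum ι e (c - d) := by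
  simp only [diagSum, ← Finset.sum_sub_distrib, Pi.sub_apply, map_sub, sub_mul]

theorem map_diagSum {ι : R →⋆ₐ[ℂ] M} {e : Fin n → Fin n → M} {γ : R ≃ₐ[ℂ] R}
    {γM : M ≃ₐ[ℂ] M} (hγι : ∀ r, γM (ι r) = ι (γ r)) (hγe : ∀ i j, γM (e i j) = e i j)
    (c : Fin n → R) : γM (diagSum ι e c) = diagSum ι e (fun i => γ (c i)) := by
  simp only [diagSum, map_sum, map_mul, hγι, hγe]

variable {trR : R →ₗ[ℂ] ℂ} {trM : M →ₗ[ℂ] ℂ} {ι : R →⋆ₐ[ℂ] M} {e : Fin n → Fin n → M}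

namespace IsTensorMatrixUnits

theorem star_iota_mul (he : IsTensorMatrixUnits trR trM ι e) (r : R) (i j : Fin n) :
    star (ι r * e i j) = ι (star r) * e j i := by
  rw [star_mul, he.star_eq, ← map_star, he.comm]

theorem iota_mul_mul_iota_mul (he : IsTensorMatrixUnits trR trM ι e) (r s : R)
    (i j k l : Fin n) :
    ι r * e i j * (ι s * e k l) = if j = k then ι (r * s) * e i l else 0 := by
  rw [mul_assoc, ← mul_assoc (e i j), ← he.comm, mul_assoc, he.mul_eq, ← mul_assoc, ← map_mul]
  split_ifs <;> simp

theorem diagSum_mul_diagSum (he : IsTensorMatrixUnits trR trM ι e) (c d : Fin n → R) :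
    diagSum ι e c * diagSum ι e d = diagSum ι e (c * d) := by
  simp only [diagSum, Finset.sum_mul_sum, he.iota_mul_mul_iota_mul, Finset.sum_ite_eq,
    Finset.mem_univ, if_true, Pi.mul_apply]

theorem star_diagSum (he : IsTensorMatrixUnits trR trM ι e) (c : Fin n → R) :
    star (diagSum ι e c) = diagSum ι e (star c) := by
  simp only [diagSum, star_sum, he.star_iota_mul, Pi.star_apply]

theorem trace_diagSum (he : IsTensorMatrixUnits trR trM ι e) (c : Fin n → R) :
    trM (diagSum ι e c) = (n : ℂ)⁻¹ * ∑ i, trR (c i) := by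
  simp only [diagSum, map_sum, he.trace_eq, if_true, Finset.mul_sum]

theorem diagSum_mul_sub_mul_diagSum (he : IsTensorMatrixUnits trR trM ι e) (c : Fin n → R)
    (j k : Fin n) : diagSum ι e c * e j k - e j k * diagSum ι e c = ι (c j - c k) * e j k := by
  simp only [diagSum, Finset.sum_mul, Finset.mul_sum, mul_assoc, he.mul_eq, ← mul_assoc (e j k),
    ← he.comm]
  simp [map_sub, sub_mul]

theorem diagSum_mul_iota_sub (he : IsTensorMatrixUnits trR trM ι e) (c : Fin n → R) (u : R) :
    diagSum ι e c * ι u - ι u * diagSum ι e c = diagSum ι e (fun i => c i * u - u * c i) := by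
  rw [diagSum, diagSum, Finset.sum_mul, Finset.mul_sum, ← Finset.sum_sub_distrib]
  refine Finset.sum_congr rfl fun i _ => ?_
  rw [map_sub, sub_mul, map_mul, map_mul, mul_assoc (ι (c i)), ← he.comm, ← mul_assoc,
    ← mul_assoc]

variable [PartialOrder R] [StarOrderedRing R]

theorem nrm2_diagSum (he : IsTensorMatrixUnits trR trM ι e) (htr : IsTracialState trR)
    (c : Fin n → R) :
    nrm2 trM (diagSum ι e c) = √((n : ℝ)⁻¹ * ∑ i, nrm2 trR (c i) ^ 2) := by
  rw [nrm2, he.star_diagSum, he.diagSum_mul_diagSum, he.trace_diagSum]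
  simp only [Pi.mul_apply, Pi.star_apply, htr.tr_star_mul_self, ← Complex.ofReal_sum,
    ← Complex.ofReal_natCast, ← Complex.ofReal_inv, ← Complex.ofReal_mul, Complex.ofReal_re]

theorem nrm2_iota_mul (he : IsTensorMatrixUnits trR trM ι e) (htr : IsTracialState trR)
    (r : R) (i j : Fin n) : nrm2 trM (ι r * e i j) = √((n : ℝ)⁻¹) * nrm2 trR r := by
  rw [nrm2, he.star_iota_mul, he.iota_mul_mul_iota_mul, if_pos rfl, he.trace_eq, if_pos rfl,
    htr.tr_star_mul_self, ← Complex.ofReal_natCast, ← Complex.ofReal_inv, ← Complex.ofReal_mul,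
    Complex.ofReal_re, Real.sqrt_mul (by positivity), Real.sqrt_sq (nrm2_nonneg trR r)]

theorem nrm2_le_sqrt_mul_nrm2_diagSum (he : IsTensorMatrixUnits trR trM ι e)
    (htr : IsTracialState trR) (c : Fin n → R) (j : Fin n) :
    nrm2 trR (c j) ≤ √n * nrm2 trM (diagSum ι e c) := by
  have hn : (n : ℝ) ≠ 0 := Nat.cast_ne_zero.2 (Fin.pos j).ne'
  rw [he.nrm2_diagSum htr, ← Real.sqrt_mul (Nat.cast_nonneg n), ← mul_assoc, mul_inv_cancel₀ hn,
    one_mul, ← Real.sqrt_sq (nrm2_nonneg trR (c j))]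
  exact Real.sqrt_le_sqrt (Finset.single_le_sum (fun i _ => sq_nonneg (nrm2 trR (c i)))
    (Finset.mem_univ j))

theorem tendsto_nrm2_diagSum (he : IsTensorMatrixUnits trR trM ι e) (htr : IsTracialState trR)
    {l : Filter ℕ} {c : ℕ → Fin n → R} (hc : ∀ i, Tendsto (fun m => nrm2 trR (c m i)) l (𝓝 0)) :
    Tendsto (fun m => nrm2 trM (diagSum ι e (c m))) l (𝓝 0) := by
  simp_rw [he.nrm2_diagSum htr]
  simpa using ((tendsto_finsetSum Finset.univ fun i _ => (hc i).pow 2).const_mul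
    ((n : ℝ)⁻¹)).sqrt

theorem tendsto_nrm2_sub_of_commutator_eM (he : IsTensorMatrixUnits trR trM ι e)
    (htr : IsTracialState trR) {l : Filter ℕ} {c : ℕ → Fin n → R} (j k : Fin n)
    (hc : Tendsto (fun m => nrm2 trM (diagSum ι e (c m) * e j k - e j k * diagSum ι e (c m)))
      l (𝓝 0)) :
    Tendsto (fun m => nrm2 trR (c m j - c m k)) l (𝓝 0) := by
  have hn : (n : ℝ) ≠ 0 := Nat.cast_ne_zero.2 (Fin.pos j).ne'
  refine squeeze_zero (fun _ => nrm2_nonneg trR _) (fun m => le_of_eq ?_)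
    (by simpa using hc.const_mul √n)
  rw [he.diagSum_mul_sub_mul_diagSum, he.nrm2_iota_mul htr, ← mul_assoc,
    ← Real.sqrt_mul (Nat.cast_nonneg n), mul_inv_cancel₀ hn, Real.sqrt_one, one_mul]

theorem tendsto_nrm2_commutator_of_commutator_iota (he : IsTensorMatrixUnits trR trM ι e)
    (htr : IsTracialState trR) {l : Filter ℕ} {c : ℕ → Fin n → R} (u : R) (k : Fin n)
    (hc : Tendsto (fun m => nrm2 trM (diagSum ι e (c m) * ι u - ι u * diagSum ι e (c m)))
      l (𝓝 0)) :
    Tendsto (fun m => nrm2 trR (c m k * u - u * c m k)) l (𝓝 0) := by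
  refine squeeze_zero (fun _ => nrm2_nonneg trR _) (fun m => ?_)
    (by simpa using hc.const_mul √n)
  rw [he.diagSum_mul_iota_sub]
  exact he.nrm2_le_sqrt_mul_nrm2_diagSum htr (fun i => c m i * u - u * c m i) k

end IsTensorMatrixUnits

end MatrixUnits

section Ultrapower

variable {M : Type*} [NormedRing M]

theorem bddSeq_const (a : M) : BddSeq (fun _ : ℕ => a) := ⟨‖a‖, fun _ => le_rfl⟩

theorem BddSeq.mul {x y : ℕ → M} (hx : BddSeq x) (hy : BddSeq y) :
    BddSeq (fun m => x m * y m) := by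
  obtain ⟨C, hC⟩ := hx
  obtain ⟨D, hD⟩ := hy
  exact ⟨C * D, fun m => (norm_mul_le _ _).trans
    (mul_le_mul (hC m) (hD m) (norm_nonneg _) ((norm_nonneg _).trans (hC m)))⟩

variable [StarRing M] [NormedAlgebra ℂ M] {N : Type*} [NormedRing N] [StarRing N]
  [NormedAlgebra ℂ N]

theorem IsUltrapower.tendsto_nrm2_commutator {ω : Ultrafilter ℕ} {trM : M →ₗ[ℂ] ℂ}
    {trN : N →ₗ[ℂ] ℂ} {π : (ℕ → M) → N} (hπ : IsUltrapower ω trM trN π) {x : ℕ → M}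
    (hx : BddSeq x) (hxc : π x ∈ commutantSet (Set.range (uConst π))) (a : M) :
    Tendsto (fun m => nrm2 trM (x m * a - a * x m)) ω (𝓝 0) := by
  refine (hπ.eq_iff _ _ (hx.mul (bddSeq_const a)) ((bddSeq_const a).mul hx)).1 ?_
  rw [hπ.map_mul _ _ hx (bddSeq_const a), hπ.map_mul _ _ (bddSeq_const a) hx]
  exact (hxc _ ⟨a, rfl⟩).symm

end Ultrapower

theorem diagonal_subfactor_central_sequences_are_G_fixed_general
    {R : Type*} [NormedRing R] [StarRing R] [NormedAlgebra ℂ R] [StarModule ℂ R] [PartialOrder R] [StarOrderedRing R]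
    {M1 : Type*} [NormedRing M1] [StarRing M1] [NormedAlgebra ℂ M1]
    {N : Type*} [NormedRing N] [StarRing N] [NormedAlgebra ℂ N]
    (trR : R →ₗ[ℂ] ℂ) (trM : M1 →ₗ[ℂ] ℂ) (trN : N →ₗ[ℂ] ℂ)
    -- `R` is the hyperfinite II₁ factor:
    (hR : IsII1Factor trR)
    (n : ℕ) (hn : 0 < n)
    -- automorphisms `α₁ = id, α₂, ..., αₙ` of `R`, outer for `i ≠ 0`:
    (α : Fin n → (R ≃ₐ[ℂ] R))
    (hα0 : α ⟨0, hn⟩ = 1)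
    (hαstar : ∀ i (r : R), α i (star r) = star (α i r))
    (hαtr : ∀ i (r : R), trR (α i r) = trR r)
    -- `M₁ = R ⊗ Mₙ(ℂ)`, presented by matrix units `eM` and an embedding `ι` of `R`:
    (eM : Fin n → Fin n → M1)
    (hmul : ∀ i j k l, eM i j * eM k l = if j = k then eM i l else 0)
    (hstar : ∀ i j, star (eM i j) = eM j i)
    (ι : R →⋆ₐ[ℂ] M1)
    (hιcomm : ∀ (r : R) i j, ι r * eM i j = eM i j * ι r)
    (hιtr : ∀ (r : R) i j, trM (ι r * eM i j) = if i = j then ((n : ℂ))⁻¹ * trR r else 0)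
    (ω : Ultrafilter ℕ)
    (π : (ℕ → M1) → N) (hπ : IsUltrapower ω trM trN π)
    :
    -- for every representative `γ` of an element of `G` ...
    ∀ γ : R ≃ₐ[ℂ] R,
      (∃ β ∈ Subgroup.closure (Set.range α), ∃ u ∈ unitary R,
        ∀ r : R, γ r = u * β r * star u) →
    -- ... extended to `M₁` as `γ ⊗ id` ...
    ∀ γM : M1 ≃ₐ[ℂ] M1,
      (∀ r : R, γM (ι r) = ι (γ r)) → (∀ i j, γM (eM i j) = eM i j) →
    -- ... the induced pointwise automorphism of `M₁^ω` fixes every element of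
    -- `M₀^ω ∩ M₁'`:
    ∀ x : ℕ → M1, BddSeq x →
      (∀ m, x m ∈ Set.range (fun r : R => ∑ i, ι ((α i) r) * eM i i)) →
      π x ∈ commutantSet (Set.range (uConst π)) →
      BddSeq (fun m => γM (x m)) →
      π (fun m => γM (x m)) = π x := by
  intro γ ⟨β, hβ, u, hu, hγ⟩ γM hγι hγe x hbx hxdiag hxcomm hbγx
  have he : IsTensorMatrixUnits trR trM ι eM := ⟨hmul, hstar, hιcomm, hιtr⟩
  have htr := hR.tracial
  choose y hy using hxdiag
  obtain rfl : x = fun m => diagSum ι eM (fun i => α i (y m)) := funext fun m => (hy m).symm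
  have hcomm := hπ.tendsto_nrm2_commutator hbx hxcomm
  have hαy (j : Fin n) : α j ∈ asymptoticStabilizer htr ω y :=
    ⟨⟨hαstar j, hαtr j⟩, by
      simpa only [hα0, AlgEquiv.one_apply] using
        he.tendsto_nrm2_sub_of_commutator_eM htr j ⟨0, hn⟩ (hcomm (eM j ⟨0, hn⟩))⟩
  have huy : Tendsto (fun m => nrm2 trR (u * y m - y m * u)) ω (𝓝 0) := by
    simpa only [hα0, AlgEquiv.one_apply, nrm2_sub_comm] using
      he.tendsto_nrm2_commutator_of_commutator_iota htr u ⟨0, hn⟩ (hcomm (ι u))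
  have hstab : Subgroup.closure (Set.range α) ≤ asymptoticStabilizer htr ω y :=
    (Subgroup.closure_le _).2 (Set.range_subset_iff.2 hαy)
  refine (hπ.eq_iff _ _ hbγx hbx).2 ?_
  simp only [map_diagSum hγι hγe, diagSum_sub, hγ]
  refine he.tendsto_nrm2_diagSum htr fun i => ?_
  exact htr.tendsto_nrm2_unitary_conj_sub hu huy
    (hstab (mul_mem hβ (Subgroup.subset_closure ⟨i, rfl⟩))).2
    (hstab (Subgroup.subset_closure ⟨i, rfl⟩)).2

/-- For the diagonal subfactor `M₀ = α(R) ⊂ M₁ = R ⊗ Mₙ(ℂ)` (with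
`α(y) = ∑ᵢ eᵢᵢ ⊗ αᵢ(y)`), every element of `M₀^ω ∩ M₁'` is fixed by the pointwise
ultrapower automorphism `(α_g)_ω` of every representative `α_g ∈ Aut R` of every
element `g` of the image `G` in `Out R` of the group generated by the `αᵢ`; that is,
`M₀^ω ∩ M₁'` is contained in the fixed-point algebra of the action of `G` on
`(M₁)_ω`. -/
theorem diagonal_subfactor_central_sequences_are_G_fixed
    {R : Type*} [NormedRing R] [StarRing R] [CStarRing R] [NormedAlgebra ℂ R] [StarModule ℂ R] [PartialOrder R] [StarOrderedRing R] [CompleteSpace R]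
    {M1 : Type*} [NormedRing M1] [StarRing M1] [CStarRing M1] [NormedAlgebra ℂ M1] [StarModule ℂ M1] [PartialOrder M1] [StarOrderedRing M1] [CompleteSpace M1]
    {N : Type*} [NormedRing N] [StarRing N] [CStarRing N] [NormedAlgebra ℂ N] [StarModule ℂ N] [PartialOrder N] [StarOrderedRing N] [CompleteSpace N]
    (trR : R →ₗ[ℂ] ℂ) (trM : M1 →ₗ[ℂ] ℂ) (trN : N →ₗ[ℂ] ℂ)
    -- `R` is the hyperfinite II₁ factor:
    (hR : IsII1Factor trR) (hRhyp : IsHyperfiniteSet trR (Set.univ : Set R))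
    (hM : IsII1Factor trM)
    (n : ℕ) (hn : 0 < n)
    -- automorphisms `α₁ = id, α₂, ..., αₙ` of `R`, outer for `i ≠ 0`:
    (α : Fin n → (R ≃ₐ[ℂ] R))
    (hα0 : α ⟨0, hn⟩ = 1)
    (hαstar : ∀ i (r : R), α i (star r) = star (α i r))
    (hαtr : ∀ i (r : R), trR (α i r) = trR r)
    (houter : ∀ i : Fin n, i ≠ ⟨0, hn⟩ →
      ¬ ∃ u ∈ unitary R, ∀ r : R, α i r = u * r * star u)
    -- `M₁ = R ⊗ Mₙ(ℂ)`, presented by matrix units `eM` and an embedding `ι` of `R`: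
    (eM : Fin n → Fin n → M1)
    (hmul : ∀ i j k l, eM i j * eM k l = if j = k then eM i l else 0)
    (hstar : ∀ i j, star (eM i j) = eM j i)
    (hsum : (∑ i, eM i i) = 1)
    (ι : R →⋆ₐ[ℂ] M1)
    (hιinj : Function.Injective ι)
    (hιcomm : ∀ (r : R) i j, ι r * eM i j = eM i j * ι r)
    (hspan : ∀ x : M1, ∃ a : Fin n → Fin n → R, x = ∑ i, ∑ j, ι (a i j) * eM i j)
    (hιtr : ∀ (r : R) i j, trM (ι r * eM i j) = if i = j then ((n : ℂ))⁻¹ * trR r else 0)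
    (ω : Ultrafilter ℕ) (hω : IsFreeUltrafilter ω)
    (π : (ℕ → M1) → N) (hπ : IsUltrapower ω trM trN π)
    :
    -- for every representative `γ` of an element of `G` ...
    ∀ γ : R ≃ₐ[ℂ] R,
      (∃ β ∈ Subgroup.closure (Set.range α), ∃ u ∈ unitary R,
        ∀ r : R, γ r = u * β r * star u) →
    -- ... extended to `M₁` as `γ ⊗ id` ...
    ∀ γM : M1 ≃ₐ[ℂ] M1,
      (∀ r : R, γM (ι r) = ι (γ r)) → (∀ i j, γM (eM i j) = eM i j) →
    -- ... the induced pointwise automorphism of `M₁^ω` fixes every element of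
    -- `M₀^ω ∩ M₁'`:
    ∀ x : ℕ → M1, BddSeq x →
      (∀ m, x m ∈ Set.range (fun r : R => ∑ i, ι ((α i) r) * eM i i)) →
      π x ∈ commutantSet (Set.range (uConst π)) →
      BddSeq (fun m => γM (x m)) →
      π (fun m => γM (x m)) = π x :=
  diagonal_subfactor_central_sequences_are_G_fixed_general trR trM trN hR n hn α hα0 hαstar hαtr eM
    hmul hstar ι hιcomm hιtr ω π hπ
end
end

section
/- Let A₀ ⊂ A₁ ⊂ A₂ ⊂ ... be the Jones tower arising from a connected inclusion of finite-dimensional von Neumann algebras with Markov trace, with Markov constant τ = tr(eᵢ), and let s^{(n)} and t^{(n)} denote the size and trace vectors of A_n under the standard consistent labeling of central projections. Then lim_{k→∞} τ^k s^{(i+2k)} = ‖t^{(i)}‖^{-2} t^{(i)}, and t^{(i+2k)} = τ^k t^{(i)} for all k ≥ 0. -/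
/-!
Write `M = ΛΛᵀ`, a symmetric matrix with positive eigenvector `t = t⁽⁰⁾` for the eigenvalue `τ⁻¹`.
Since `M t⁽ᵏ⁺¹⁾ = t⁽ᵏ⁾`, the vector `t⁽ᵏ⁺¹⁾ - τᵏ⁺¹ t` lies both in the kernel and in the range of
`M`, hence vanishes. For the sizes, `τᵏ s⁽ᵏ⁾ = (τM)ᵏ s⁽⁰⁾`. Pairing with `t` and using the strict
triangle inequality for the positive matrix `(τM)ᵐ`, every eigenvector of `τM` orthogonal to `t`
has an eigenvalue of modulus `< 1`, and the eigenspace of `1` is `ℝ t`. Diagonalizing, the powers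
`(τM)ᵏ` converge; the limit of `(τM)ᵏ s⁽⁰⁾` is fixed by `τM`, hence a multiple of `t`, and its
pairing with `t` is `⟨s⁽⁰⁾, t⟩ = 1`.
-/

open Filter Topology Matrix

section

variable {n : Type*} [Fintype n]

theorem exists_pos_of_dotProduct_eq_zero {t v : n → ℝ} (ht : ∀ a, 0 < t a) (hv : v ≠ 0)
    (horth : v ⬝ᵥ t = 0) : ∃ a, 0 < v a := by
  by_contra! hle
  refine hv (funext fun a => ?_)
  have hterms := (Finset.sum_eq_zero_iff_of_nonpos fun a _ =>
    mul_nonpos_of_nonpos_of_nonneg (hle a) (ht a).le).mp horth a (Finset.mem_univ a)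
  simpa [(ht a).ne'] using hterms

theorem abs_sum_mul_lt_sum_mul_abs {w v : n → ℝ} (hw : ∀ d, 0 < w d) {a b : n} (ha : 0 < v a)
    (hb : v b < 0) : |∑ d, w d * v d| < ∑ d, w d * |v d| := by
  refine abs_lt.mpr ⟨?_, ?_⟩
  · rw [← Finset.sum_neg_distrib]
    refine Finset.sum_lt_sum (fun d _ => ?_) ⟨a, Finset.mem_univ a, ?_⟩
    · rw [← mul_neg]; exact mul_le_mul_of_nonneg_left (neg_abs_le _) (hw d).le
    · rw [← mul_neg]; exact mul_lt_mul_of_pos_left (by rw [abs_of_pos ha]; linarith) (hw a)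
  · refine Finset.sum_lt_sum (fun d _ => mul_le_mul_of_nonneg_left (le_abs_self _) (hw d).le)
      ⟨b, Finset.mem_univ b, mul_lt_mul_of_pos_left (by rw [abs_of_neg hb]; linarith) (hw b)⟩

end

namespace Matrix

variable {n R : Type*} [Fintype n]

theorem IsSymm.mulVec_dotProduct [CommSemiring R] {A : Matrix n n R} (hA : A.IsSymm)
    (u v : n → R) : A *ᵥ u ⬝ᵥ v = u ⬝ᵥ A *ᵥ v := by
  rw [dotProduct_mulVec, ← vecMul_transpose, hA.eq]

theorem pow_mulVec_of_mulVec_eq_smul [DecidableEq n] [CommSemiring R] {A : Matrix n n R}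
    {v : n → R} {c : R} (hv : A *ᵥ v = c • v) (k : ℕ) : (A ^ k) *ᵥ v = c ^ k • v := by
  induction k with
  | zero => simp
  | succ k ih => rw [pow_succ', ← mulVec_mulVec, ih, mulVec_smul, hv, smul_smul, pow_succ]

theorem IsSymm.eq_zero_of_mulVec_eq_zero [CommRing R] [LinearOrder R] [IsStrictOrderedRing R]
    {A : Matrix n n R} (hA : A.IsSymm) {d e : n → R} (hd : A *ᵥ d = 0) (he : A *ᵥ e = d) :
    d = 0 := by
  rw [← dotProduct_self_eq_zero]
  nth_rw 1 [← he]
  rw [hA.mulVec_dotProduct, hd, dotProduct_zero]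

theorem mulVec_eq_of_tendsto_pow_mulVec [DecidableEq n] [Semiring R] [TopologicalSpace R]
    [IsTopologicalSemiring R] [T2Space R] {A : Matrix n n R} {v L : n → R}
    (h : Tendsto (fun k => (A ^ k) *ᵥ v) atTop (𝓝 L)) : A *ᵥ L = L := by
  have hA : Tendsto (fun k => A *ᵥ ((A ^ k) *ᵥ v)) atTop (𝓝 (A *ᵥ L)) :=
    ((continuous_const.matrix_mulVec continuous_id).tendsto L).comp h
  refine tendsto_nhds_unique hA ?_
  simpa only [mulVec_mulVec, ← pow_succ'] using (tendsto_add_atTop_iff_nat 1).mpr h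

theorem IsSymm.eq_pow_smul_of_mulVec_succ_eq [Field R] [LinearOrder R] [IsStrictOrderedRing R]
    {A : Matrix n n R} (hA : A.IsSymm) {t : ℕ → n → R} {c : R} (hc : c ≠ 0)
    (h0 : A *ᵥ t 0 = c⁻¹ • t 0) (hsucc : ∀ k, A *ᵥ t (k + 1) = t k) (k : ℕ) :
    t k = c ^ k • t 0 := by
  have hscale : ∀ j, A *ᵥ (c ^ (j + 1) • t 0) = c ^ j • t 0 := fun j => by
    rw [mulVec_smul, h0, smul_smul, pow_succ, mul_assoc, mul_inv_cancel₀ hc, mul_one]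
  induction k with
  | zero => rw [pow_zero, one_smul]
  | succ k ih =>
    refine sub_eq_zero.mp (hA.eq_zero_of_mulVec_eq_zero (e := t (k + 2) - c ^ (k + 2) • t 0) ?_ ?_)
    · rw [mulVec_sub, hsucc, hscale, ih, sub_self]
    · rw [mulVec_sub, hsucc, hscale]

theorem IsHermitian.exists_tendsto_pow [DecidableEq n] {A : Matrix n n ℝ} (hA : A.IsHermitian)
    (h : ∀ i, hA.eigenvalues i = 1 ∨ |hA.eigenvalues i| < 1) :
    ∃ Q, Tendsto (fun k => A ^ k) atTop (𝓝 Q) := by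
  set U := (hA.eigenvectorUnitary : Matrix n n ℝ)
  have hpow : ∀ k, A ^ k = U * diagonal (fun i => hA.eigenvalues i ^ k) * star U := fun k => by
    conv_lhs => rw [hA.spectral_theorem]
    rw [← map_pow, diagonal_pow, Unitary.conjStarAlgAut_apply]
    rfl
  have hlim : ∀ i, ∃ l, Tendsto (fun k => hA.eigenvalues i ^ k) atTop (𝓝 l) := fun i => by
    rcases h i with h1 | hlt
    · exact ⟨1, by simp [h1]⟩
    · exact ⟨0, tendsto_pow_atTop_nhds_zero_of_abs_lt_one hlt⟩
  choose l hl using hlim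
  refine ⟨U * diagonal l * star U, ?_⟩
  simp only [hpow]
  exact (tendsto_const_nhds.mul
    ((continuous_id.matrix_diagonal.tendsto l).comp (tendsto_pi_nhds.mpr hl))).mul
    tendsto_const_nhds

section PerronFrobenius

variable [DecidableEq n] {A : Matrix n n ℝ} {m : ℕ} {t : n → ℝ} {ρ : ℝ}

theorem IsSymm.abs_lt_of_dotProduct_eq_zero (hA : A.IsSymm) (hm : m ≠ 0)
    (hpos : ∀ a b, 0 < (A ^ m) a b) (ht : ∀ a, 0 < t a) (hρ : 0 ≤ ρ) (hAt : A *ᵥ t = ρ • t)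
    {v : n → ℝ} {μ : ℝ} (hv : v ≠ 0) (hAv : A *ᵥ v = μ • v) (horth : v ⬝ᵥ t = 0) :
    |μ| < ρ := by
  obtain ⟨a, ha⟩ := exists_pos_of_dotProduct_eq_zero ht hv horth
  obtain ⟨b, hb⟩ := exists_pos_of_dotProduct_eq_zero ht (neg_ne_zero.mpr hv)
    (by rw [neg_dotProduct, horth, neg_zero])
  -- `v` takes both signs, so the triangle inequality is strict in every row of `A ^ m`
  set w : n → ℝ := fun d => |v d|
  have hpointwise : ∀ c, |μ| ^ m * w c < (A ^ m *ᵥ w) c := fun c => by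
    have hc := congrFun (pow_mulVec_of_mulVec_eq_smul hAv m) c
    simp only [mulVec, dotProduct, Pi.smul_apply, smul_eq_mul] at hc
    have := abs_sum_mul_lt_sum_mul_abs (hpos c) ha (neg_pos.mp hb)
    rwa [hc, abs_mul, abs_pow] at this
  have hwt : 0 < w ⬝ᵥ t := Finset.sum_pos' (fun d _ => mul_nonneg (abs_nonneg _) (ht d).le)
    ⟨a, Finset.mem_univ a, mul_pos (abs_pos.mpr ha.ne') (ht a)⟩
  have hlt : |μ| ^ m * (w ⬝ᵥ t) < ρ ^ m * (w ⬝ᵥ t) := calc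
    |μ| ^ m * (w ⬝ᵥ t) = ∑ c, |μ| ^ m * w c * t c := by
      rw [dotProduct, Finset.mul_sum]
      simp only [mul_assoc]
    _ < ∑ c, (A ^ m *ᵥ w) c * t c := Finset.sum_lt_sum_of_nonempty ⟨a, Finset.mem_univ a⟩
      fun c _ => mul_lt_mul_of_pos_right (hpointwise c) (ht c)
    _ = w ⬝ᵥ A ^ m *ᵥ t := (hA.pow m).mulVec_dotProduct w t
    _ = ρ ^ m * (w ⬝ᵥ t) := by rw [pow_mulVec_of_mulVec_eq_smul hAt, dotProduct_smul, smul_eq_mul]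
  exact (pow_lt_pow_iff_left₀ (abs_nonneg μ) hρ hm).mp (lt_of_mul_lt_mul_right hlt hwt.le)

theorem IsSymm.eq_or_abs_lt_of_mulVec_eq_smul (hA : A.IsSymm) (hm : m ≠ 0)
    (hpos : ∀ a b, 0 < (A ^ m) a b) (ht : ∀ a, 0 < t a) (hρ : 0 ≤ ρ) (hAt : A *ᵥ t = ρ • t)
    {v : n → ℝ} {μ : ℝ} (hv : v ≠ 0) (hAv : A *ᵥ v = μ • v) : μ = ρ ∨ |μ| < ρ := by
  refine or_iff_not_imp_left.mpr fun hne =>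
    hA.abs_lt_of_dotProduct_eq_zero hm hpos ht hρ hAt hv hAv ?_
  have hsym : μ * (v ⬝ᵥ t) = ρ * (v ⬝ᵥ t) := by
    rw [← smul_eq_mul, ← smul_dotProduct, ← hAv, hA.mulVec_dotProduct, hAt, dotProduct_smul,
      smul_eq_mul]
  exact (mul_eq_mul_right_iff.mp hsym).resolve_left hne

theorem IsSymm.eq_smul_of_mulVec_eq_smul (hA : A.IsSymm) (hm : m ≠ 0)
    (hpos : ∀ a b, 0 < (A ^ m) a b) (ht : ∀ a, 0 < t a) (hρ : 0 ≤ ρ) (hAt : A *ᵥ t = ρ • t)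
    {u : n → ℝ} (hAu : A *ᵥ u = ρ • u) : u = (u ⬝ᵥ t / t ⬝ᵥ t) • t := by
  by_contra hne
  have horth : (u - (u ⬝ᵥ t / t ⬝ᵥ t) • t) ⬝ᵥ t = 0 := by
    rw [sub_dotProduct, smul_dotProduct, smul_eq_mul, sub_eq_zero, div_mul_cancel_of_imp]
    intro htt
    rw [dotProduct_self_eq_zero.mp htt, dotProduct_zero]
  have := hA.abs_lt_of_dotProduct_eq_zero hm hpos ht hρ hAt (sub_ne_zero.mpr hne)
    (by rw [mulVec_sub, mulVec_smul, hAu, hAt, smul_sub, smul_comm]) horth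
  exact (le_abs_self ρ).not_gt this

theorem IsSymm.tendsto_pow_mulVec (hA : A.IsSymm) (hm : m ≠ 0) (hpos : ∀ a b, 0 < (A ^ m) a b)
    (ht : ∀ a, 0 < t a) (hAt : A *ᵥ t = t) (v : n → ℝ) :
    Tendsto (fun k => (A ^ k) *ᵥ v) atTop (𝓝 ((v ⬝ᵥ t / t ⬝ᵥ t) • t)) := by
  have hAt' : A *ᵥ t = (1 : ℝ) • t := by rw [one_smul, hAt]
  have hH : A.IsHermitian := isHermitian_iff_isSymm.mpr hA
  obtain ⟨Q, hQ⟩ := hH.exists_tendsto_pow fun i =>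
    hA.eq_or_abs_lt_of_mulVec_eq_smul hm hpos ht zero_le_one hAt'
      (by simpa using hH.eigenvectorBasis.orthonormal.ne_zero i) (hH.mulVec_eigenvectorBasis i)
  have hL : Tendsto (fun k => (A ^ k) *ᵥ v) atTop (𝓝 (Q *ᵥ v)) :=
    ((continuous_id.matrix_mulVec continuous_const).tendsto Q).comp hQ
  have hfix : A *ᵥ (Q *ᵥ v) = Q *ᵥ v := mulVec_eq_of_tendsto_pow_mulVec hL
  have hdot : Q *ᵥ v ⬝ᵥ t = v ⬝ᵥ t := by
    have hconst : ∀ k, (A ^ k) *ᵥ v ⬝ᵥ t = v ⬝ᵥ t := fun k => by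
      rw [(hA.pow k).mulVec_dotProduct, pow_mulVec_of_mulVec_eq_smul hAt', one_pow, one_smul]
    have hcont : Continuous fun x : n → ℝ => x ⬝ᵥ t := continuous_id.dotProduct continuous_const
    refine tendsto_nhds_unique ((hcont.tendsto (Q *ᵥ v)).comp hL) ?_
    simpa only [Function.comp_def, hconst] using tendsto_const_nhds
  rwa [hA.eq_smul_of_mulVec_eq_smul hm hpos ht zero_le_one hAt' (u := Q *ᵥ v)
    (by rw [one_smul, hfix]), hdot] at hL

end PerronFrobenius

end Matrix

theorem perron_frobenius_size_and_trace_vector_asymptotics_general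
    {ι κ : Type*} [Fintype ι] [Fintype κ] [DecidableEq ι]
    -- the inclusion matrix, with nonnegative integer entries:
    (Λ : Matrix ι κ ℝ)
    -- connectedness: some power of `ΛΛᵀ` has all entries positive:
    (hconn : ∃ m : ℕ, ∀ a b : ι, 0 < (((Λ * Λ.transpose) ^ (m + 1)) a b))
    (τ : ℝ) (hτ : 0 < τ)
    (sE : ℕ → ι → ℝ) (sO : ℕ → κ → ℝ) (tE : ℕ → ι → ℝ) (tO : ℕ → κ → ℝ)
    -- the inclusion matrices of the tower alternate between `Λ` and `Λᵀ`:
    (hsO : ∀ k, sO k = Λ.transpose.mulVec (sE k))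
    (hsE : ∀ k, sE (k + 1) = Λ.mulVec (sO k))
    (htE : ∀ k, tE k = Λ.mulVec (tO k))
    (htO : ∀ k, tO k = Λ.transpose.mulVec (tE (k + 1)))
    -- sizes are positive, trace vectors are positive:
    (htpos : ∀ k a, 0 < tE k a)
    -- normalization of the trace: `⟨s, t⟩ = 1` at each level:
    (hnorm : ∀ k, ∑ a, sE k a * tE k a = 1)
    -- the Markov condition: the trace vector is the Perron–Frobenius eigenvector of
    -- `ΛΛᵀ`, with eigenvalue `τ⁻¹ = ‖ΛΛᵀ‖`:
    (hmarkov : (Λ * Λ.transpose).mulVec (tE 0) = τ⁻¹ • tE 0) :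
    (∀ k, tE k = τ ^ k • tE 0) ∧
      Filter.Tendsto (fun k => τ ^ k • sE k) Filter.atTop
        (nhds ((∑ a, (tE 0 a) ^ 2)⁻¹ • tE 0)) := by
  obtain ⟨m, hpos⟩ := hconn
  set M := Λ * Λᵀ
  have hM : M.IsSymm := by rw [IsSymm, transpose_mul, transpose_transpose]
  refine ⟨hM.eq_pow_smul_of_mulVec_succ_eq hτ.ne' hmarkov fun k => ?_, ?_⟩
  · rw [← mulVec_mulVec, ← htO, ← htE]
  have hsize : ∀ k, τ ^ k • sE k = (τ • M) ^ k *ᵥ sE 0 := fun k => by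
    induction k with
    | zero => rw [pow_zero, pow_zero, one_smul, one_mulVec]
    | succ k ih =>
      rw [pow_succ' (τ • M), ← mulVec_mulVec, ← ih, hsE, hsO, mulVec_mulVec, smul_mulVec,
        mulVec_smul, smul_smul, pow_succ']
  have hNpos : ∀ a b, 0 < ((τ • M) ^ (m + 1)) a b := fun a b => by
    rw [smul_pow, Matrix.smul_apply, smul_eq_mul]
    exact mul_pos (pow_pos hτ _) (hpos a b)
  have hNt : (τ • M) *ᵥ tE 0 = tE 0 := by
    rw [smul_mulVec, hmarkov, smul_smul, mul_inv_cancel₀ hτ.ne', one_smul]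
  have hcoeff : sE 0 ⬝ᵥ tE 0 / tE 0 ⬝ᵥ tE 0 = (∑ a, tE 0 a ^ 2)⁻¹ := by
    simp only [dotProduct, hnorm 0, sq, one_div]
  simpa only [hsize, hcoeff] using
    (hM.smul τ).tendsto_pow_mulVec m.succ_ne_zero hNpos (htpos 0) hNt (sE 0)

/-- Let `A₀ ⊂ A₁ ⊂ ⋯` be the Jones tower of a connected inclusion
of finite-dimensional von Neumann algebras with Markov trace, with Markov constant
`τ = tr eᵢ`, inclusion matrix `Λ`, and (under the standard consistent labeling of
central summands) size vectors `s^{(i+2k)} = sE k`, `s^{(i+2k+1)} = sO k` and trace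
vectors `t^{(i+2k)} = tE k`, `t^{(i+2k+1)} = tO k`.  Then
`lim_{k→∞} τ^k s^{(i+2k)} = ‖t^{(i)}‖⁻² t^{(i)}` and `t^{(i+2k)} = τ^k t^{(i)}`
for all `k ≥ 0`. -/
theorem perron_frobenius_size_and_trace_vector_asymptotics
    {ι κ : Type*} [Fintype ι] [Fintype κ] [DecidableEq ι] [Nonempty ι] [Nonempty κ]
    -- the inclusion matrix, with nonnegative integer entries:
    (Λ : Matrix ι κ ℝ) (hΛnn : ∀ a b, 0 ≤ Λ a b)
    (hΛint : ∀ a b, ∃ m : ℕ, Λ a b = m)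
    -- connectedness: some power of `ΛΛᵀ` has all entries positive:
    (hconn : ∃ m : ℕ, ∀ a b : ι, 0 < (((Λ * Λ.transpose) ^ (m + 1)) a b))
    (τ : ℝ) (hτ : 0 < τ)
    (sE : ℕ → ι → ℝ) (sO : ℕ → κ → ℝ) (tE : ℕ → ι → ℝ) (tO : ℕ → κ → ℝ)
    -- the inclusion matrices of the tower alternate between `Λ` and `Λᵀ`:
    (hsO : ∀ k, sO k = Λ.transpose.mulVec (sE k))
    (hsE : ∀ k, sE (k + 1) = Λ.mulVec (sO k))
    (htE : ∀ k, tE k = Λ.mulVec (tO k))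
    (htO : ∀ k, tO k = Λ.transpose.mulVec (tE (k + 1)))
    -- sizes are positive, trace vectors are positive:
    (hspos : ∀ a, 0 < sE 0 a)
    (htpos : ∀ k a, 0 < tE k a)
    -- normalization of the trace: `⟨s, t⟩ = 1` at each level:
    (hnorm : ∀ k, ∑ a, sE k a * tE k a = 1)
    -- the Markov condition: the trace vector is the Perron–Frobenius eigenvector of
    -- `ΛΛᵀ`, with eigenvalue `τ⁻¹ = ‖ΛΛᵀ‖`:
    (hmarkov : (Λ * Λ.transpose).mulVec (tE 0) = τ⁻¹ • tE 0) :
    (∀ k, tE k = τ ^ k • tE 0) ∧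
      Filter.Tendsto (fun k => τ ^ k • sE k) Filter.atTop
        (nhds ((∑ a, (tE 0 a) ^ 2)⁻¹ • tE 0)) :=
  perron_frobenius_size_and_trace_vector_asymptotics_general Λ hconn τ hτ sE sO tE tO hsO hsE htE
    htO htpos hnorm hmarkov
end
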